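/- arXiv:1307.0332 — 4 statements merged into one kernel-verified Lean document; each statement's English description precedes it below -/
import Mathlib

section
/- Let G = (N, E) be an unweighted graph, let v be the characteristic function of the matching game MG(G), and let i, j ∈ N be distinct vertices such that for every vertex k ∈ N \ {i, j}, k is adjacent to i if and only if k is adjacent to j. Then i and j are symmetric players in (N, v), i.e., v(S ∪ {i}) = v(S ∪ {j}) for every coalition S ⊆ N \ {i, j}. -/
attribute [local instance] Classical.propDecidable

/-- `M` is a matching of the subgraph of the graph with edge set `E` induced by
the vertex set `S`. -/
def IsMatchingOn {V : Type*} (E : Finset (Sym2 V)) (S : Finset V) (M : Finset (Sym2 V)) : Prop :=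
  M ⊆ E ∧ (∀ e ∈ M, ¬ e.IsDiag) ∧ (∀ e ∈ M, ∀ x ∈ e, x ∈ S) ∧
    (∀ e ∈ M, ∀ f ∈ M, e ≠ f → ∀ x ∈ e, x ∉ f)

/-- Value of a coalition `S` in the weighted matching game on the graph with edge set `E` and
weights `w`: the maximum total weight of a matching in the induced subgraph on `S`. -/
noncomputable def matchVal {V : Type*} (E : Finset (Sym2 V)) (w : Sym2 V → ℝ)
    (S : Finset V) : ℝ :=
  sSup {x : ℝ | ∃ M : Finset (Sym2 V), IsMatchingOn E S M ∧ x = ∑ e ∈ M, w e}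

/-- Value of a coalition `S` in the unweighted matching game: the maximum cardinality of a
matching in the induced subgraph on `S`. -/
noncomputable def umatchVal {V : Type*} (E : Finset (Sym2 V)) (S : Finset V) : ℕ :=
  sSup {k : ℕ | ∃ M : Finset (Sym2 V), IsMatchingOn E S M ∧ k = M.card}

/-- The Shapley value of player `i` in the cooperative game with (finite) player set `N` and
characteristic function `v`. -/
noncomputable def shapley {V : Type*} [DecidableEq V] (N : Finset V) (v : Finset V → ℝ)
    (i : V) : ℝ :=
  (1 / (Nat.factorial N.card) : ℝ) *
    ∑ S ∈ (N.erase i).powerset,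
      (Nat.factorial S.card : ℝ) * (Nat.factorial (N.card - S.card - 1) : ℝ) *
        (v (insert i S) - v S)

/-- The raw Shapley value of player `i` in the cooperative game with player set `N` and
characteristic function `v`. -/
noncomputable def rawShapley {V : Type*} [DecidableEq V] (N : Finset V) (v : Finset V → ℝ)
    (i : V) : ℝ :=
  ∑ S ∈ (N.erase i).powerset,
    (Nat.factorial S.card : ℝ) * (Nat.factorial (N.card - S.card - 1) : ℝ) *
      (v (insert i S) - v S)

/- Exchanging `i` and `j` is a bijection of the vertices that carries every matching on
`S ∪ {i}` to a matching of the same size on `S ∪ {j}`, because an edge of such a matching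
either avoids `i` (and is fixed) or joins `i` to some `k ∈ S`, and then `s(k, j)` is an edge too.
The same holds with `i` and `j` exchanged, so both maxima coincide. -/

open Function

theorem IsMatchingOn.image {V W : Type*} [DecidableEq W] {E : Finset (Sym2 V)}
    {E' : Finset (Sym2 W)} {S : Finset V} {T : Finset W} {M : Finset (Sym2 V)}
    (hM : IsMatchingOn E S M) {f : V → W} (hf : Injective f) (hST : ∀ x ∈ S, f x ∈ T)
    (hE : ∀ a ∈ S, ∀ b ∈ S, a ≠ b → s(a, b) ∈ E → s(f a, f b) ∈ E') :
    IsMatchingOn E' T (M.image (Sym2.map f)) := by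
  obtain ⟨hME, hMdiag, hMS, hMdisj⟩ := hM
  simp only [IsMatchingOn, Finset.forall_mem_image, Sym2.mem_map]
  refine ⟨?_, fun e he => (Sym2.isDiag_map hf).not.mpr (hMdiag e he), ?_, ?_⟩
  · rw [Finset.image_subset_iff]
    intro e he
    induction e using Sym2.ind with
    | h a b =>
      have hab : a ≠ b := fun h => hMdiag _ he (Sym2.mk_isDiag_iff.mpr h)
      exact hE a (hMS _ he a (Sym2.mem_mk_left a b)) b (hMS _ he b (Sym2.mem_mk_right a b)) hab
        (hME he)
  · rintro e he _ ⟨x, hx, rfl⟩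
    exact hST x (hMS e he x hx)
  · rintro e he e' he' hne _ ⟨x, hx, rfl⟩ ⟨y, hy, hxy⟩
    exact hMdisj e he e' he' (fun h => hne (h ▸ rfl)) x hx (hf hxy ▸ hy)

theorem bddAbove_matchingCards {V : Type*} (E : Finset (Sym2 V)) (S : Finset V) :
    BddAbove {k : ℕ | ∃ M : Finset (Sym2 V), IsMatchingOn E S M ∧ k = M.card} := by
  refine ⟨E.card, ?_⟩
  rintro _ ⟨M, hM, rfl⟩
  exact Finset.card_le_card hM.1

theorem umatchVal_le_of_injective {V W : Type*} [DecidableEq W] {E : Finset (Sym2 V)}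
    {E' : Finset (Sym2 W)} {S : Finset V} {T : Finset W} {f : V → W} (hf : Injective f)
    (hST : ∀ x ∈ S, f x ∈ T)
    (hE : ∀ a ∈ S, ∀ b ∈ S, a ≠ b → s(a, b) ∈ E → s(f a, f b) ∈ E') :
    umatchVal E S ≤ umatchVal E' T := by
  refine csSup_le ⟨0, ∅, by simp [IsMatchingOn], rfl⟩ ?_
  rintro _ ⟨M, hM, rfl⟩
  refine le_csSup (bddAbove_matchingCards E' T) ⟨_, hM.image hf hST hE, ?_⟩
  rw [Finset.card_image_of_injective _ (Sym2.map.injective hf)]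

section Swap

variable {V : Type*} [DecidableEq V] {i j : V} {S : Finset V}

theorem swap_apply_of_mem_insert (hjS : j ∉ S) {x : V} (hx : x ∈ insert i S) (hxi : x ≠ i) :
    x ≠ j ∧ Equiv.swap i j x = x := by
  have hxj : x ≠ j := fun h => hjS (h ▸ (Finset.mem_insert.mp hx).resolve_left hxi)
  exact ⟨hxj, Equiv.swap_apply_of_ne_of_ne hxi hxj⟩

theorem swap_mem_insert (hjS : j ∉ S) {x : V} (hx : x ∈ insert i S) :
    Equiv.swap i j x ∈ insert j S := by
  by_cases hxi : x = i
  · simp [hxi]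
  · rw [(swap_apply_of_mem_insert hjS hx hxi).2]
    exact Finset.mem_insert_of_mem ((Finset.mem_insert.mp hx).resolve_left hxi)

theorem swap_mk_mem_of_mem {E : Finset (Sym2 V)}
    (hadj : ∀ k : V, k ≠ i → k ≠ j → s(k, i) ∈ E → s(k, j) ∈ E) (hjS : j ∉ S) :
    ∀ a ∈ insert i S, ∀ b ∈ insert i S, a ≠ b → s(a, b) ∈ E →
      s(Equiv.swap i j a, Equiv.swap i j b) ∈ E := by
  intro a ha b hb hab hE
  by_cases hai : a = i
  · subst hai
    obtain ⟨hbj, hb⟩ := swap_apply_of_mem_insert hjS hb hab.symm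
    rw [Equiv.swap_apply_left, hb, Sym2.eq_swap]
    exact hadj b hab.symm hbj (Sym2.eq_swap ▸ hE)
  by_cases hbi : b = i
  · subst hbi
    obtain ⟨haj, ha⟩ := swap_apply_of_mem_insert hjS ha hab
    rw [Equiv.swap_apply_left, ha]
    exact hadj a hab haj hE
  rw [(swap_apply_of_mem_insert hjS ha hai).2, (swap_apply_of_mem_insert hjS hb hbi).2]
  exact hE

theorem umatchVal_insert_le_of_neighbours_subset {E : Finset (Sym2 V)}
    (hadj : ∀ k : V, k ≠ i → k ≠ j → s(k, i) ∈ E → s(k, j) ∈ E) (hjS : j ∉ S) :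
    umatchVal E (insert i S) ≤ umatchVal E (insert j S) :=
  umatchVal_le_of_injective (Equiv.swap i j).injective (fun _ => swap_mem_insert hjS)
    (swap_mk_mem_of_mem hadj hjS)

end Swap

theorem symmetric_of_same_neighbours_general {V : Type*} [DecidableEq V]
    (E : Finset (Sym2 V))
    (i j : V)
    (hadj : ∀ k : V, k ≠ i → k ≠ j → (s(k, i) ∈ E ↔ s(k, j) ∈ E))
    (S : Finset V) (hiS : i ∉ S) (hjS : j ∉ S) :
    umatchVal E (insert i S) = umatchVal E (insert j S) := by
  apply le_antisymm
  · exact umatchVal_insert_le_of_neighbours_subset (fun k hki hkj => (hadj k hki hkj).mp) hjS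
  · exact umatchVal_insert_le_of_neighbours_subset (fun k hkj hki => (hadj k hki hkj).mpr) hiS

/-- If two distinct vertices `i` and `j` of an unweighted graph have the same
neighbours among the other vertices, then they are symmetric players in the matching game. -/
theorem symmetric_of_same_neighbours {V : Type*} [Fintype V] [DecidableEq V]
    (E : Finset (Sym2 V)) (hloop : ∀ e ∈ E, ¬ e.IsDiag)
    (i j : V) (hij : i ≠ j)
    (hadj : ∀ k : V, k ≠ i → k ≠ j → (s(k, i) ∈ E ↔ s(k, j) ∈ E))
    (S : Finset V) (hiS : i ∉ S) (hjS : j ∉ S) :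
    umatchVal E (insert i S) = umatchVal E (insert j S) :=
  symmetric_of_same_neighbours_general E i j hadj S hiS hjS
end

section
/- Let P_n be the unweighted path graph on vertex set {1, …, n} and let v be the characteristic function of the matching game MG(P_n). Let i ∈ {1, …, n} and let S ⊆ {1, …, n} \ {i} be a coalition such that for some k1 ≥ 1 and k2 ≥ 1 the vertices i − k1, …, i − 1 and i + 1, …, i + k2 all belong to S, while i − k1 − 1 ∉ S and i + k2 + 1 ∉ S (vertices outside {1, …, n} being treated as absent). Then i is pivotal for S if and only if it is not the case that both k1 and k2 are even. -/
attribute [local instance] Classical.propDecidable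

/-- Edge set of the path graph `P_n` on vertex set `{1, …, n}`. -/
def pathEdges (n : ℕ) : Finset (Sym2 ℕ) :=
  (Finset.Icc 1 (n - 1)).image (fun j : ℕ => s(j, j + 1))

/-!
In a path, a run `l, …, r` of consecutive vertices of a coalition whose two neighbours `l - 1`
and `r + 1` lie outside it is joined to the rest by no edge, and it has a matching of size
`⌊(r + 1 - l) / 2⌋`, the most any set of `r + 1 - l` vertices can carry. Hence it contributes
exactly that much to the matching number, whatever the rest of the coalition is. Adding `i` fuses
the runs of lengths `k1` and `k2` into one of length `k1 + k2 + 1`, so the gain is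
`⌊(k1 + k2 + 1) / 2⌋ - ⌊k1 / 2⌋ - ⌊k2 / 2⌋`, which is `0` when `k1` and `k2` are both even and
`1` otherwise.
-/

open Finset

section Matching

variable {V : Type*} {E : Finset (Sym2 V)} {S T U : Finset V} {M N : Finset (Sym2 V)}

def IsEdgeClosedIn (E : Finset (Sym2 V)) (U T : Finset V) : Prop :=
  ∀ e ∈ E, ∀ x ∈ e, ∀ y ∈ e, x ∈ T → y ∈ U → y ∈ T

lemma IsMatchingOn.card_le_umatchVal (hM : IsMatchingOn E S M) : M.card ≤ umatchVal E S :=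
  le_csSup ⟨E.card, fun _ ⟨_, hN, hk⟩ => hk ▸ card_le_card hN.1⟩ ⟨M, hM, rfl⟩

lemma exists_isMatchingOn_card_eq_umatchVal (E : Finset (Sym2 V)) (S : Finset V) :
    ∃ M, IsMatchingOn E S M ∧ M.card = umatchVal E S := by
  obtain ⟨M, hM, hcard⟩ := Nat.sSup_mem (s := {k | ∃ M, IsMatchingOn E S M ∧ k = M.card})
    ⟨0, ∅, by simp [IsMatchingOn], rfl⟩
    ⟨E.card, fun _ ⟨_, hN, hk⟩ => hk ▸ card_le_card hN.1⟩
  exact ⟨M, hM, hcard.symm⟩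

lemma IsMatchingOn.filter (hM : IsMatchingOn E S M) (p : Sym2 V → Prop) [DecidablePred p] :
    IsMatchingOn E S (M.filter p) :=
  ⟨(filter_subset p M).trans hM.1, fun e he => hM.2.1 e (mem_of_mem_filter e he),
    fun e he => hM.2.2.1 e (mem_of_mem_filter e he),
    fun e he f hf => hM.2.2.2 e (mem_of_mem_filter e he) f (mem_of_mem_filter f hf)⟩

lemma IsMatchingOn.of_forall_mem (hM : IsMatchingOn E S M) (hT : ∀ e ∈ M, ∀ x ∈ e, x ∈ T) :
    IsMatchingOn E T M :=
  ⟨hM.1, hM.2.1, hT, hM.2.2.2⟩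

variable [DecidableEq V]

lemma IsMatchingOn.two_mul_card_le (hM : IsMatchingOn E S M) : 2 * M.card ≤ S.card := by
  have hdisj : (M : Set (Sym2 V)).PairwiseDisjoint Sym2.toFinset := fun e he f hf hne =>
    disjoint_left.mpr fun x hxe hxf =>
      hM.2.2.2 e he f hf hne x (Sym2.mem_toFinset.mp hxe) (Sym2.mem_toFinset.mp hxf)
  calc 2 * M.card = ∑ e ∈ M, e.toFinset.card := by
        rw [sum_congr rfl fun e he => Sym2.card_toFinset_of_not_isDiag e (hM.2.1 e he),
          sum_const, smul_eq_mul, mul_comm]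
    _ = (M.biUnion Sym2.toFinset).card := (card_biUnion hdisj).symm
    _ ≤ S.card := card_le_card fun x hx => by
        obtain ⟨e, he, hxe⟩ := mem_biUnion.mp hx
        exact hM.2.2.1 e he x (Sym2.mem_toFinset.mp hxe)

lemma IsMatchingOn.union (hM : IsMatchingOn E S M) (hN : IsMatchingOn E T N)
    (hST : Disjoint S T) : IsMatchingOn E (S ∪ T) (M ∪ N) := by
  have hMN : ∀ e ∈ M, ∀ f ∈ N, ∀ x ∈ e, x ∉ f := fun e he f hf x hxe hxf =>
    disjoint_left.mp hST (hM.2.2.1 e he x hxe) (hN.2.2.1 f hf x hxf)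
  refine ⟨union_subset hM.1 hN.1, ?_, ?_, ?_⟩
  · intro e he
    rcases mem_union.mp he with he | he
    exacts [hM.2.1 e he, hN.2.1 e he]
  · intro e he x hx
    rcases mem_union.mp he with he | he
    exacts [mem_union_left T (hM.2.2.1 e he x hx), mem_union_right S (hN.2.2.1 e he x hx)]
  · intro e he f hf hne x hx
    rcases mem_union.mp he with he | he <;> rcases mem_union.mp hf with hf | hf
    · exact hM.2.2.2 e he f hf hne x hx
    · exact hMN e he f hf x hx
    · exact fun hxf => hMN f hf e he x hxf hx
    · exact hN.2.2.2 e he f hf hne x hx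

lemma card_add_umatchVal_sdiff_le (hTU : T ⊆ U) (hM : IsMatchingOn E T M) :
    M.card + umatchVal E (U \ T) ≤ umatchVal E U := by
  obtain ⟨N, hN, hcard⟩ := exists_isMatchingOn_card_eq_umatchVal E (U \ T)
  have hMN : Disjoint M N := disjoint_left.mpr fun e heM heN =>
    (mem_sdiff.mp (hN.2.2.1 e heN _ (Sym2.out_fst_mem e))).2 (hM.2.2.1 e heM _ (Sym2.out_fst_mem e))
  have hunion := hM.union hN disjoint_sdiff
  rw [union_sdiff_of_subset hTU] at hunion
  simpa only [← hcard, card_union_of_disjoint hMN] using hunion.card_le_umatchVal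

lemma umatchVal_le_umatchVal_sdiff_add (hT : IsEdgeClosedIn E U T) :
    umatchVal E U ≤ umatchVal E (U \ T) + T.card / 2 := by
  obtain ⟨M, hM, hcard⟩ := exists_isMatchingOn_card_eq_umatchVal E U
  have hinside : IsMatchingOn E T (M.filter fun e => ∃ x ∈ e, x ∈ T) :=
    (hM.filter _).of_forall_mem fun e he y hy => by
      obtain ⟨heM, x, hx, hxT⟩ := mem_filter.mp he
      exact hT e (hM.1 heM) x hx y hy hxT (hM.2.2.1 e heM y hy)
  have houtside : IsMatchingOn E (U \ T) (M.filter fun e => ¬ ∃ x ∈ e, x ∈ T) :=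
    (hM.filter _).of_forall_mem fun e he y hy => by
      obtain ⟨heM, hnT⟩ := mem_filter.mp he
      exact mem_sdiff.mpr ⟨hM.2.2.1 e heM y hy, fun hyT => hnT ⟨y, hy, hyT⟩⟩
  have := hinside.two_mul_card_le
  have := houtside.card_le_umatchVal
  have := card_filter_add_card_filter_not (s := M) (fun e => ∃ x ∈ e, x ∈ T)
  omega

lemma umatchVal_eq_umatchVal_sdiff_add (hTU : T ⊆ U) (hT : IsEdgeClosedIn E U T)
    (hM : IsMatchingOn E T M) (hcard : M.card = T.card / 2) :
    umatchVal E U = umatchVal E (U \ T) + T.card / 2 :=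
  le_antisymm (umatchVal_le_umatchVal_sdiff_add hT)
    (hcard ▸ add_comm M.card _ ▸ card_add_umatchVal_sdiff_le hTU hM)

end Matching

section Path

lemma mem_pathEdges {n : ℕ} {e : Sym2 ℕ} :
    e ∈ pathEdges n ↔ ∃ j, 1 ≤ j ∧ j + 1 ≤ n ∧ e = s(j, j + 1) := by
  simp only [pathEdges, mem_image, mem_Icc]
  constructor
  · rintro ⟨j, ⟨hj1, hj2⟩, rfl⟩
    exact ⟨j, hj1, by omega, rfl⟩
  · rintro ⟨j, hj1, hj2, rfl⟩
    exact ⟨j, ⟨hj1, by omega⟩, rfl⟩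

lemma isEdgeClosedIn_pathEdges_Icc {n l r : ℕ} {U : Finset ℕ} (hl : l - 1 ∉ U)
    (hr : r + 1 ∉ U) : IsEdgeClosedIn (pathEdges n) U (Icc l r) := by
  intro e he x hx y hy hxT hyU
  obtain ⟨j, hj1, -, rfl⟩ := mem_pathEdges.mp he
  have hyl : y ≠ l - 1 := fun h => hl (h ▸ hyU)
  have hyr : y ≠ r + 1 := fun h => hr (h ▸ hyU)
  rw [Sym2.mem_iff] at hx hy
  rw [mem_Icc] at hxT ⊢
  omega

def pathMatching (a m : ℕ) : Finset (Sym2 ℕ) :=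
  (range m).image fun j => s(a + 2 * j, a + 2 * j + 1)

lemma card_pathMatching (a m : ℕ) : (pathMatching a m).card = m := by
  rw [pathMatching, card_image_of_injective _ fun j j' h => by rw [Sym2.eq_iff] at h; omega,
    card_range]

lemma isMatchingOn_pathMatching {n l r : ℕ} (hl : 1 ≤ l) (hr : r ≤ n) :
    IsMatchingOn (pathEdges n) (Icc l r) (pathMatching l ((r + 1 - l) / 2)) := by
  have hmem : ∀ e ∈ pathMatching l ((r + 1 - l) / 2),
      ∃ j < (r + 1 - l) / 2, e = s(l + 2 * j, l + 2 * j + 1) := by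
    simp only [pathMatching, mem_image, mem_range]
    rintro e ⟨j, hj, rfl⟩
    exact ⟨j, hj, rfl⟩
  refine ⟨?_, ?_, ?_, ?_⟩
  · intro e he
    obtain ⟨j, hj, rfl⟩ := hmem e he
    exact mem_pathEdges.mpr ⟨l + 2 * j, by omega, by omega, rfl⟩
  · intro e he
    obtain ⟨j, -, rfl⟩ := hmem e he
    simp
  · intro e he x hx
    obtain ⟨j, hj, rfl⟩ := hmem e he
    rw [Sym2.mem_iff] at hx
    exact mem_Icc.mpr (by omega)
  · intro e he f hf hne x hx hxf
    obtain ⟨j, -, rfl⟩ := hmem e he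
    obtain ⟨j', -, rfl⟩ := hmem f hf
    have : j ≠ j' := fun h => hne (h ▸ rfl)
    rw [Sym2.mem_iff] at hx hxf
    omega

lemma umatchVal_pathEdges_eq_sdiff_Icc_add {n l r : ℕ} {U : Finset ℕ} (h1l : 1 ≤ l)
    (hrn : r ≤ n) (hU : Icc l r ⊆ U) (hl : l - 1 ∉ U) (hr : r + 1 ∉ U) :
    umatchVal (pathEdges n) U = umatchVal (pathEdges n) (U \ Icc l r) + (r + 1 - l) / 2 := by
  rw [← Nat.card_Icc l r]
  exact umatchVal_eq_umatchVal_sdiff_add hU (isEdgeClosedIn_pathEdges_Icc hl hr)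
    (isMatchingOn_pathMatching h1l hrn) (by rw [card_pathMatching, Nat.card_Icc])

lemma Icc_subset_insert {a b i : ℕ} {S : Finset ℕ} (hL : Icc a (i - 1) ⊆ S)
    (hR : Icc (i + 1) b ⊆ S) : Icc a b ⊆ insert i S := fun x hx => by
  obtain ⟨h1, h2⟩ := mem_Icc.mp hx
  rcases lt_trichotomy x i with h | rfl | h
  exacts [mem_insert_of_mem (hL (mem_Icc.mpr ⟨h1, by omega⟩)), mem_insert_self x S,
    mem_insert_of_mem (hR (mem_Icc.mpr ⟨by omega, h2⟩))]

lemma insert_sdiff_Icc {a b i : ℕ} {S : Finset ℕ} (hi : i ∉ S) (hai : a ≤ i) (hib : i ≤ b) :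
    insert i S \ Icc a b = (S \ Icc a (i - 1)) \ Icc (i + 1) b := by
  ext x
  by_cases hxS : x ∈ S
  · have : x ≠ i := fun h => hi (h ▸ hxS)
    simp only [mem_sdiff, mem_insert, mem_Icc, hxS, or_true, true_and]
    omega
  · simp only [mem_sdiff, mem_insert, mem_Icc, hxS, or_false, false_and, iff_false]
    omega

end Path

theorem pivotal_path_connect_segments_general (n : ℕ) (i : ℕ)
    (S : Finset ℕ) (hS : S ⊆ Finset.Icc 1 n) (hiS : i ∉ S)
    (k1 k2 : ℕ) (hk1 : 1 ≤ k1) (hk2 : 1 ≤ k2)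
    (hsegL : ∀ t, 1 ≤ t → t ≤ k1 → i - t ∈ S) (hendL : i - k1 - 1 ∉ S)
    (hsegR : ∀ t, 1 ≤ t → t ≤ k2 → i + t ∈ S) (hendR : i + k2 + 1 ∉ S) :
    (umatchVal (pathEdges n) (insert i S) = umatchVal (pathEdges n) S + 1) ↔
      ¬ (Even k1 ∧ Even k2) := by
  have hlo := mem_Icc.mp (hS (hsegL k1 hk1 le_rfl))
  have hhi := mem_Icc.mp (hS (hsegR k2 hk2 le_rfl))
  have hL : Icc (i - k1) (i - 1) ⊆ S := fun x hx => by
    obtain ⟨h1, h2⟩ := mem_Icc.mp hx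
    simpa [show i - (i - x) = x by omega] using hsegL (i - x) (by omega) (by omega)
  have hR : Icc (i + 1) (i + k2) ⊆ S := fun x hx => by
    obtain ⟨h1, h2⟩ := mem_Icc.mp hx
    simpa [show i + (x - i) = x by omega] using hsegR (x - i) (by omega) (by omega)
  have hfused := umatchVal_pathEdges_eq_sdiff_Icc_add (n := n) (by omega) hhi.2
    (Icc_subset_insert hL hR) (by simp [hendL]; omega) (by simp [hendR]; omega)
  have hleft := umatchVal_pathEdges_eq_sdiff_Icc_add (n := n) (by omega) (by omega) hL hendL
    (by rwa [Nat.sub_add_cancel (by omega)])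
  have hright := umatchVal_pathEdges_eq_sdiff_Icc_add (n := n) (U := S \ Icc (i - k1) (i - 1))
    (by omega) hhi.2 (fun x hx => mem_sdiff.mpr ⟨hR hx, by simp only [mem_Icc] at hx ⊢; omega⟩)
    (by simp [hiS]) (by simp [hendR])
  rw [insert_sdiff_Icc hiS (by omega) (by omega)] at hfused
  rw [Nat.even_iff, Nat.even_iff]
  omega

/-- In the matching game on the path `P_n`, if the coalition `S` contains the
segments `i-k1, …, i-1` and `i+1, …, i+k2` (`k1, k2 ≥ 1`) but neither `i-k1-1` nor `i+k2+1`,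
then `i` is pivotal for `S` iff `k1` and `k2` are not both even. -/
theorem pivotal_path_connect_segments (n : ℕ) (i : ℕ) (hi : i ∈ Finset.Icc 1 n)
    (S : Finset ℕ) (hS : S ⊆ Finset.Icc 1 n) (hiS : i ∉ S)
    (k1 k2 : ℕ) (hk1 : 1 ≤ k1) (hk2 : 1 ≤ k2)
    (hsegL : ∀ t, 1 ≤ t → t ≤ k1 → i - t ∈ S) (hendL : i - k1 - 1 ∉ S)
    (hsegR : ∀ t, 1 ≤ t → t ≤ k2 → i + t ∈ S) (hendR : i + k2 + 1 ∉ S) :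
    (umatchVal (pathEdges n) (insert i S) = umatchVal (pathEdges n) S + 1) ↔
      ¬ (Even k1 ∧ Even k2) :=
  pivotal_path_connect_segments_general n i S hS hiS k1 k2 hk1 hk2 hsegL hendL hsegR hendR
end

section
/- For every n ≥ 0, the (n+1) × (n+1) matrix B with rows and columns indexed by 0, …, n and entries B_{ij} = (i + j)! has determinant equal to the product Π_{i=0}^{n} (i!)²; in particular, B is nonsingular. -/
/-!
Writing `(i + j)! = i! j! C(i + j, j)` and expanding `C(i + j, j) = Σₖ C(i, k) C(j, k)` by
Vandermonde's identity factors the matrix as `L Lᵀ` with `L i k = i! C(i, k)`. Since `L` is lower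
triangular with diagonal `i!`, the determinant is `∏ (i!)²`.
-/

open Finset Matrix Nat

theorem Nat.add_choose_eq_sum_range_choose_mul_choose (i j : ℕ) {N : ℕ} (hj : j < N) :
    (i + j).choose j = ∑ k ∈ range N, i.choose k * j.choose k := by
  rw [add_choose_eq, Nat.sum_antidiagonal_eq_sum_range_succ_mk,
    ← sum_subset (range_subset_range.2 hj) fun k _ hk ↦ ?_]
  · exact sum_congr rfl fun k hk ↦ by rw [choose_symm (mem_range_succ_iff.1 hk)]
  · rw [choose_eq_zero_of_lt (by simpa using hk : j < k), mul_zero]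

theorem Nat.factorial_add_eq_sum_range (i j : ℕ) {N : ℕ} (hj : j < N) :
    (i + j)! = ∑ k ∈ range N, (i ! * i.choose k) * (j ! * j.choose k) := by
  rw [← add_choose_mul_factorial_mul_factorial i j,
    add_choose_eq_sum_range_choose_mul_choose i j hj, sum_mul, sum_mul]
  exact sum_congr rfl fun k _ ↦ by ring

namespace Matrix

variable (R : Type*) (n : ℕ)

def factorialChooseMatrix [Semiring R] : Matrix (Fin n) (Fin n) R :=
  of fun i k ↦ ((i : ℕ)! * (i : ℕ).choose k : ℕ)

theorem factorialChooseMatrix_mul_transpose [CommSemiring R] :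
    factorialChooseMatrix R n * (factorialChooseMatrix R n)ᵀ =
      of fun i j : Fin n ↦ ((i + j : ℕ)! : R) := by
  ext i j
  simp only [factorialChooseMatrix, mul_apply, transpose_apply, of_apply,
    factorial_add_eq_sum_range i j j.isLt, Fin.sum_univ_eq_sum_range
      (fun k ↦ ((i ! * (i : ℕ).choose k : ℕ) : R) * ((j ! * (j : ℕ).choose k : ℕ) : R))]
  push_cast
  rfl

theorem isLowerTriangular_factorialChooseMatrix [Semiring R] :
    (factorialChooseMatrix R n).IsLowerTriangular := fun i k hik ↦ by
  simp [factorialChooseMatrix, choose_eq_zero_of_lt (show (i : ℕ) < k from hik)]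

theorem det_factorialChooseMatrix [CommRing R] :
    (factorialChooseMatrix R n).det = ∏ i ∈ range n, (i ! : R) := by
  rw [det_of_isLowerTriangular _ (isLowerTriangular_factorialChooseMatrix R n),
    ← Fin.prod_univ_eq_prod_range]
  simp [factorialChooseMatrix]

theorem det_of_factorial_add [CommRing R] :
    (of fun i j : Fin n ↦ ((i + j : ℕ)! : R)).det = ∏ i ∈ range n, (i ! : R) ^ 2 := by
  rw [← factorialChooseMatrix_mul_transpose, det_mul, det_transpose, det_factorialChooseMatrix,
    ← prod_mul_distrib]
  simp_rw [sq]

end Matrix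

/-- The `(n+1) × (n+1)` matrix `B` with `B i j = (i + j)!` has determinant
`Π_{i=0}^{n} (i!)²`; in particular it is nonsingular. -/
theorem det_factorial_matrix (n : ℕ) (B : Matrix (Fin (n + 1)) (Fin (n + 1)) ℚ)
    (hB : ∀ i j : Fin (n + 1), B i j = (Nat.factorial (i.val + j.val) : ℚ)) :
    B.det = ∏ i ∈ Finset.range (n + 1), (Nat.factorial i : ℚ) ^ 2 ∧ B.det ≠ 0 := by
  have hB_of : B = of fun i j : Fin (n + 1) ↦ ((i + j : ℕ)! : ℚ) := ext hB
  have hdet := hB_of ▸ det_of_factorial_add ℚ (n + 1)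
  exact ⟨hdet, hdet ▸ prod_ne_zero_iff.2 fun i _ ↦ by positivity⟩
end

section
/- Let G = (N, E, w) be a weighted graph with nonnegative edge weights and n = |N| ≥ 2 vertices, and let v be the characteristic function of the matching game MG(G). Let i ∈ N be a vertex with at least one incident edge, and let w_i^max denote the maximum weight among the edges incident to i. Then the raw Shapley value of i satisfies κ_i(N, v) ≥ w_i^max · (n − 2)!. -/
attribute [local instance] Classical.propDecidable

/-- Maximum weight among the edges incident to `i` (and `0` if `i` has no incident edge). -/
noncomputable def maxIncW {V : Type*} (E : Finset (Sym2 V)) (w : Sym2 V → ℝ) (i : V) : ℝ :=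
  (E.filter (fun e => i ∈ e)).fold max 0 w

/-!
Since the matching game is monotone, every marginal contribution `v(S ∪ {i}) - v(S)` in the
Shapley sum is nonnegative, so the sum is at least its term for `S = {j}`, namely
`1! (n - 2)! (v({i, j}) - v({j})) = (n - 2)! v({i, j}) ≥ (n - 2)! w(ij)`, for any edge `ij`.
-/

open Finset

section MatchingGame

variable {V : Type*} {E : Finset (Sym2 V)} {w : Sym2 V → ℝ}

lemma isMatchingOn_empty (E : Finset (Sym2 V)) (S : Finset V) : IsMatchingOn E S ∅ := by
  refine ⟨empty_subset _, ?_, ?_, ?_⟩ <;> simp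

lemma isMatchingOn_singleton_edge {e : Sym2 V} (he : e ∈ E) (hdiag : ¬ e.IsDiag) {S : Finset V}
    (heS : ∀ x ∈ e, x ∈ S) : IsMatchingOn E S {e} := by
  refine ⟨singleton_subset_iff.mpr he, ?_, ?_, ?_⟩
  · simpa using hdiag
  · simpa using heS
  · simp +contextual

lemma eq_empty_of_isMatchingOn_singleton {j : V} {M : Finset (Sym2 V)}
    (hM : IsMatchingOn E {j} M) : M = ∅ := by
  refine eq_empty_of_forall_notMem fun e he => hM.2.1 e he ?_
  induction e using Sym2.ind with
  | _ a b =>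
    have ha := hM.2.2.1 _ he a (Sym2.mem_mk_left a b)
    have hb := hM.2.2.1 _ he b (Sym2.mem_mk_right a b)
    rw [mem_singleton] at ha hb
    simp [ha, hb]

lemma bddAbove_matchingWeights (hw : ∀ e ∈ E, 0 ≤ w e) (S : Finset V) :
    BddAbove {x : ℝ | ∃ M : Finset (Sym2 V), IsMatchingOn E S M ∧ x = ∑ e ∈ M, w e} := by
  refine ⟨∑ e ∈ E, w e, ?_⟩
  rintro x ⟨M, hM, rfl⟩
  exact sum_le_sum_of_subset_of_nonneg hM.1 fun e he _ => hw e he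

lemma sum_le_matchVal (hw : ∀ e ∈ E, 0 ≤ w e) {S : Finset V} {M : Finset (Sym2 V)}
    (hM : IsMatchingOn E S M) : ∑ e ∈ M, w e ≤ matchVal E w S :=
  le_csSup (bddAbove_matchingWeights hw S) ⟨M, hM, rfl⟩

lemma matchVal_mono (hw : ∀ e ∈ E, 0 ≤ w e) {S T : Finset V} (hST : S ⊆ T) :
    matchVal E w S ≤ matchVal E w T := by
  refine csSup_le ⟨0, ∅, isMatchingOn_empty E S, by simp⟩ ?_
  rintro x ⟨M, ⟨hsub, hdiag, hS, hdisj⟩, rfl⟩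
  exact sum_le_matchVal hw ⟨hsub, hdiag, fun e he x hx => hST (hS e he x hx), hdisj⟩

lemma matchVal_singleton_nonpos (j : V) : matchVal E w {j} ≤ 0 := by
  refine csSup_le ⟨0, ∅, isMatchingOn_empty E {j}, by simp⟩ ?_
  rintro x ⟨M, hM, rfl⟩
  simp [eq_empty_of_isMatchingOn_singleton hM]

lemma weight_le_matchVal_pair_sub_singleton [DecidableEq V] (hw : ∀ e ∈ E, 0 ≤ w e)
    {i j : V} (he : s(i, j) ∈ E) (hij : i ≠ j) :
    w s(i, j) ≤ matchVal E w {i, j} - matchVal E w {j} := by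
  have hpair : IsMatchingOn E {i, j} {s(i, j)} :=
    isMatchingOn_singleton_edge he (by simpa using hij) (by simp)
  have hle := sum_le_matchVal hw hpair
  rw [sum_singleton] at hle
  linarith [matchVal_singleton_nonpos (E := E) (w := w) j]

lemma maxIncW_le {i : V} {x : ℝ} (hx : 0 ≤ x) (hE : ∀ e ∈ E, i ∈ e → w e ≤ x) :
    maxIncW E w i ≤ x := by
  rw [maxIncW, fold_max_le]
  exact ⟨hx, fun e he => hE e (mem_filter.mp he).1 (mem_filter.mp he).2⟩

end MatchingGame

section Shapley

variable {V : Type*} [DecidableEq V] {N : Finset V} {v : Finset V → ℝ} {i : V}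

lemma rawShapley_term_nonneg (hv : ∀ S, v S ≤ v (insert i S)) (S : Finset V) :
    0 ≤ (S.card.factorial : ℝ) * ((N.card - S.card - 1).factorial : ℝ) *
      (v (insert i S) - v S) :=
  mul_nonneg (by positivity) (sub_nonneg.mpr (hv S))

lemma rawShapley_nonneg (hv : ∀ S, v S ≤ v (insert i S)) : 0 ≤ rawShapley N v i :=
  sum_nonneg fun S _ => rawShapley_term_nonneg hv S

lemma factorial_mul_pair_marginal_le_rawShapley (hv : ∀ S, v S ≤ v (insert i S)) {j : V}
    (hj : j ∈ N) (hij : i ≠ j) :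
    ((N.card - 2).factorial : ℝ) * (v {i, j} - v {j}) ≤ rawShapley N v i := by
  have hmem : ({j} : Finset V) ∈ (N.erase i).powerset := by
    simpa [mem_erase] using And.intro hij.symm hj
  have hterm := single_le_sum (fun S _ => rawShapley_term_nonneg (N := N) hv S) hmem
  simpa [rawShapley, Nat.sub_sub] using hterm

end Shapley

theorem rawShapley_lower_bound_general {V : Type*} [Fintype V] [DecidableEq V]
    (E : Finset (Sym2 V)) (w : Sym2 V → ℝ)
    (hloop : ∀ e ∈ E, ¬ e.IsDiag) (hw : ∀ e ∈ E, 0 ≤ w e)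
    (i : V) :
    maxIncW E w i * (Nat.factorial (Fintype.card V - 2) : ℝ) ≤
      rawShapley Finset.univ (matchVal E w) i := by
  have hmono : ∀ S, matchVal E w S ≤ matchVal E w (insert i S) :=
    fun S => matchVal_mono hw (subset_insert i S)
  have hfact : (0 : ℝ) < ((Fintype.card V - 2).factorial : ℝ) := by positivity
  rw [← le_div_iff₀ hfact]
  refine maxIncW_le (div_nonneg (rawShapley_nonneg hmono) hfact.le) fun e he hie => ?_
  obtain ⟨j, rfl⟩ : ∃ j, e = s(i, j) := ⟨Sym2.Mem.other hie, (Sym2.other_spec hie).symm⟩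
  have hij : i ≠ j := fun h => hloop _ he (by simp [h])
  rw [le_div_iff₀ hfact, mul_comm]
  calc ((Fintype.card V - 2).factorial : ℝ) * w s(i, j)
      ≤ ((Fintype.card V - 2).factorial : ℝ) * (matchVal E w {i, j} - matchVal E w {j}) :=
        mul_le_mul_of_nonneg_left (weight_le_matchVal_pair_sub_singleton hw he hij) hfact.le
    _ ≤ rawShapley univ (matchVal E w) i :=
        factorial_mul_pair_marginal_le_rawShapley hmono (mem_univ j) hij

/-- In a weighted matching game on `n ≥ 2` vertices with nonnegative weights,
the raw Shapley value of a vertex `i` with at least one incident edge is at least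
`w_i^max · (n - 2)!`. -/
theorem rawShapley_lower_bound {V : Type*} [Fintype V] [DecidableEq V]
    (E : Finset (Sym2 V)) (w : Sym2 V → ℝ)
    (hloop : ∀ e ∈ E, ¬ e.IsDiag) (hw : ∀ e ∈ E, 0 ≤ w e)
    (hn : 2 ≤ Fintype.card V)
    (i : V) (hinc : ∃ e ∈ E, i ∈ e) :
    maxIncW E w i * (Nat.factorial (Fintype.card V - 2) : ℝ) ≤
      rawShapley Finset.univ (matchVal E w) i :=
  rawShapley_lower_bound_general E w hloop hw i
end
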